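/- SDIC implies winning: Let n ∈ ℕ, r > 0, let A be a diagonal (n×n)-matrix with diagonal entries β₁₁,…,β_nn ∈ (0,1), let (a_k)_{k∈ℕ} be a bounded sequence of positive reals, ρ₁ ≥ r and c ∈ (0,1). If F ⊆ B[0,r] is a non-empty closed set and ℱ is a strategy defining iterative covering (SDIC) of B[0,r]∖F with respect to the tuple (A,(a_k)_{k∈ℕ},ρ₁,c), then F ∪ (ℝ^n∖B[0,r]) is (α,A,c,r,ρ₁)-winning, where α = sup_{k∈ℕ} a_k. -/
import Mathlib


open scoped ENNReal

/-- The axis-parallel closed box `A^t(B[0,r]) + y`, where `A` is the diagonal matrix with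
diagonal entries `β j`: the set of `x` with `|x j - y j| ≤ (β j)^t * r` for every `j`. -/
def gameBox {n : ℕ} (β : Fin n → ℝ) (t r : ℝ) (y : Fin n → ℝ) : Set (Fin n → ℝ) :=
  {x | ∀ j, |x j - y j| ≤ β j ^ t * r}

/-- A legal move of Player II on turn `m + 1` (turns are indexed from `1` in the paper) of the
`(α, A, c, ρ₂, ρ₁)`-potential game: an at most countable collection of pairs `(q, y)` with
`q ≥ 1`, satisfying, when `c > 0`,
`Σ (∏_j β_j^q)^c ≤ (α ∏_j β_j^(m+1))^c`, and, when `c = 0`, consisting of at most one pair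
`(q, y)`, which must satisfy `∏_j β_j^q ≤ α ∏_j β_j^(m+1)`. The empty collection (a skip) is
always legal. -/
def LegalMove {n : ℕ} (β : Fin n → ℝ) (α c : ℝ) (m : ℕ)
    (M : Set (ℝ × (Fin n → ℝ))) : Prop :=
  M.Countable ∧ (∀ p ∈ M, 1 ≤ p.1) ∧
    (if 0 < c then
      ∑' p : M, ENNReal.ofReal ((∏ j, β j ^ p.1.1) ^ c)
        ≤ ENNReal.ofReal ((α * ∏ j, β j ^ (m + 1 : ℝ)) ^ c)
    else
      M.Subsingleton ∧ ∀ p ∈ M, (∏ j, β j ^ p.1) ≤ α * ∏ j, β j ^ (m + 1 : ℝ))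

/-- `S` is a winning set for Player II in the `(α, A, c, ρ₂, ρ₁)`-potential game, where `A` is
the diagonal matrix with diagonal entries `β j`.  Player I's play on turn `m + 1` is
`U_{m+1} = A^{m+1}(B[0,r]) + b m` with `ρ₂ ≤ r ≤ ρ₁` and `U_{m+2} ⊆ U_{m+1}`; a strategy for
Player II assigns to every finite history (the radius `r` together with the centres
`b 0, …, b m` of Player I's plays so far) a collection of pairs `(q, y)`, which must be a legal
move whenever the history is legal.  The strategy is winning for `S` if for every legal infinite
play in which Player II follows it, every point `x` of `⋂ U_m` which avoids the deleted region
`⋃_m ⋃_{(q,y)} (A^q(B[0,r]) + y)` lies in `S`. -/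
def IsWinning {n : ℕ} (β : Fin n → ℝ) (α c ρ₂ ρ₁ : ℝ) (S : Set (Fin n → ℝ)) : Prop :=
  ∃ σ : ℝ → (m : ℕ) → (Fin (m + 1) → (Fin n → ℝ)) → Set (ℝ × (Fin n → ℝ)),
    (∀ (r : ℝ) (m : ℕ) (b : Fin (m + 1) → (Fin n → ℝ)),
      ρ₂ ≤ r → r ≤ ρ₁ →
      (∀ i : Fin m,
        gameBox β ((i : ℕ) + 2 : ℝ) r (b i.succ) ⊆ gameBox β ((i : ℕ) + 1 : ℝ) r (b i.castSucc)) →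
      LegalMove β α c m (σ r m b)) ∧
    (∀ (r : ℝ) (b : ℕ → (Fin n → ℝ)),
      ρ₂ ≤ r → r ≤ ρ₁ →
      (∀ m : ℕ, gameBox β ((m : ℕ) + 2 : ℝ) r (b (m + 1)) ⊆ gameBox β ((m : ℕ) + 1 : ℝ) r (b m)) →
      ∀ x : Fin n → ℝ, (∀ m : ℕ, x ∈ gameBox β ((m : ℕ) + 1 : ℝ) r (b m)) →
        x ∉ ⋃ (m : ℕ), ⋃ p ∈ σ r m (fun i : Fin (m + 1) => b (i : ℕ)), gameBox β p.1 r p.2 →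
        x ∈ S)

/-- The family `𝒮(α, A, c, ρ₂)` of sets that are `(α, A, c, ρ₂, ρ₁)`-winning for some
`ρ₁ ≥ ρ₂`. -/
def winFamily {n : ℕ} (β : Fin n → ℝ) (α c ρ₂ : ℝ) : Set (Set (Fin n → ℝ)) :=
  {S | ∃ ρ₁ : ℝ, ρ₂ ≤ ρ₁ ∧ IsWinning β α c ρ₂ ρ₁ S}

/-- `Q : ℕ → Set (ℝ × ℝⁿ)` (with `Q k` the collection `𝒬_{k+1}` of the paper) is a *strategy
defining iterative covering* (SDIC) of `B[0,r] \ F` with respect to `(A, (a k), ρ₁, c)`: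
each `Q k` is an at most countable collection of pairs `(q, y)` with `q ≥ 1`;
(SDIC 1) `B[0,r] \ F ⊆ ⋃_k ⋃_{(q,y) ∈ Q k} (A^q(B[0,r]) + y)`; and
(SDIC 2) for all `z ∈ ℝⁿ` and `k`, the sum of `(∏_j β_j^q)^c` over those `(q,y) ∈ Q k` with
`(A^q(B[0,r]) + y) ∩ (A^(k+1)(B[0,ρ₁]) + z) ≠ ∅` is at most `(a k · ∏_j β_j^(k+1))^c`. -/
def SDIC {n : ℕ} (β : Fin n → ℝ) (r : ℝ) (F : Set (Fin n → ℝ))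
    (Q : ℕ → Set (ℝ × (Fin n → ℝ))) (a : ℕ → ℝ) (ρ₁ c : ℝ) : Prop :=
  (∀ k, (Q k).Countable) ∧
  (∀ k, ∀ p ∈ Q k, 1 ≤ p.1) ∧
  (Metric.closedBall 0 r \ F ⊆ ⋃ (k : ℕ), ⋃ p ∈ Q k, gameBox β p.1 r p.2) ∧
  (∀ (z : Fin n → ℝ) (k : ℕ),
    ∑' p : {p : ℝ × (Fin n → ℝ) //
        p ∈ Q k ∧ (gameBox β p.1 r p.2 ∩ gameBox β (k + 1 : ℝ) ρ₁ z).Nonempty},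
      ENNReal.ofReal ((∏ j, β j ^ p.1.1) ^ c)
      ≤ ENNReal.ofReal ((a k * ∏ j, β j ^ (k + 1 : ℝ)) ^ c))

/-- **SDIC implies winning.**  Let `A` be the diagonal `(n × n)`-matrix with diagonal entries
`β j ∈ (0,1)`, let `r > 0`, let `(a k)` be a bounded sequence of positive reals, `ρ₁ ≥ r` and
`c ∈ (0,1)`.  If `F ⊆ B[0,r]` is a non-empty closed set and `Q` is an SDIC of `B[0,r] \ F` with
respect to `(A, (a k), ρ₁, c)`, then `F ∪ (ℝⁿ \ B[0,r])` is `(α, A, c, r, ρ₁)`-winning, where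
`α = sup_k a k`. -/
theorem sdic_winning {n : ℕ} (β : Fin n → ℝ) (hβ : ∀ j, β j ∈ Set.Ioo (0 : ℝ) 1)
    (r : ℝ) (hr : 0 < r) (ρ₁ : ℝ) (hρ₁ : r ≤ ρ₁) (c : ℝ) (hc : c ∈ Set.Ioo (0 : ℝ) 1)
    (a : ℕ → ℝ) (ha : ∀ k, 0 < a k) (hbdd : BddAbove (Set.range a))
    (F : Set (Fin n → ℝ)) (hF : F.Nonempty) (hFcl : IsClosed F)
    (hFb : F ⊆ Metric.closedBall 0 r)
    (Q : ℕ → Set (ℝ × (Fin n → ℝ))) (hQ : SDIC β r F Q a ρ₁ c) :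
    IsWinning β (⨆ k, a k) c r ρ₁ (F ∪ (Set.univ \ Metric.closedBall 0 r)) := by
  obtain ⟨hQc, hQ1, hQcov, hQsum⟩ := hQ
  have hbox_mono : ∀ (t r₁ r₂ : ℝ) (y : Fin n → ℝ), 0 ≤ r₁ → r₁ ≤ r₂ →
      gameBox β t r₁ y ⊆ gameBox β t r₂ y := by
    intro t r₁ r₂ y h0 h12 x hx j
    have hβt : (0:ℝ) ≤ β j ^ t := (Real.rpow_pos_of_pos (hβ j).1 t).le
    exact (hx j).trans (mul_le_mul_of_nonneg_left h12 hβt)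
  refine ⟨fun _ m b => {p | p ∈ Q m ∧
      (gameBox β p.1 r p.2 ∩ gameBox β (m + 1 : ℝ) ρ₁ (b (Fin.last m))).Nonempty}, ?_, ?_⟩
  · intro r' m b hr1 hr2 _
    refine ⟨(hQc m).mono (fun p hp => hp.1), fun p hp => hQ1 m p hp.1, ?_⟩
    rw [if_pos hc.1]
    refine (hQsum (b (Fin.last m)) m).trans ?_
    apply ENNReal.ofReal_le_ofReal
    have hprod : (0:ℝ) < ∏ j, β j ^ (m + 1 : ℝ) :=
      Finset.prod_pos fun j _ => Real.rpow_pos_of_pos (hβ j).1 _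
    apply Real.rpow_le_rpow (mul_pos (ha m) hprod).le ?_ hc.1.le
    exact mul_le_mul_of_nonneg_right (le_ciSup hbdd m) hprod.le
  · intro r' b hr1 hr2 hnest x hx hdel
    by_cases hxball : x ∈ Metric.closedBall (0 : Fin n → ℝ) r
    · by_cases hxF : x ∈ F
      · exact Or.inl hxF
      · exfalso
        obtain ⟨s, ⟨k, rfl⟩, hs⟩ := hQcov ⟨hxball, hxF⟩
        simp only [Set.mem_iUnion] at hs
        obtain ⟨p, hpQ, hpx⟩ := hs
        apply hdel
        refine Set.mem_iUnion.2 ⟨k, ?_⟩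
        refine Set.mem_iUnion₂.2 ⟨p, ⟨hpQ, ⟨x, hpx, ?_⟩⟩, ?_⟩
        · exact hbox_mono _ r' ρ₁ _ (hr.le.trans hr1) hr2 (hx k)
        · exact hbox_mono _ r r' _ hr.le hr1 hpx
    · exact Or.inr ⟨trivial, hxball⟩
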